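/- (Discrete nabla fractional average Sobolev inequality.) Let 0 < μ₁ < μ₂ < ... < μ_k be non-integers with m_l = ⌈μ_l⌉ for l = 1, ..., k, k ∈ ℕ. Let a ∈ ℤ₊ and b ∈ ℕ with a + m_k < b, and let f : [a−m_k+1, ..., b] → ℝ satisfy ∇^τ f(a) = 0 for τ = 0, 1, ..., m_k − 1. Let r ≥ 1 and let C_l(s) > 0 be defined on [a+1, ..., b] for l = 1, ..., k. Define B_l := Σ_{τ=a+1}^{b} C_l(τ) · ( ∇_{(a+1)*}^{μ_l} f(τ) )², δ* := max_{1≤l≤k} { (1/Γ(μ_l)²) · [ Σ_{j=a+m_l}^{b} ( Σ_{τ=a+1}^{j} ( (j−τ+1)^{↑(μ_l−1)} )² )^{r/2} ]^{2/r} }, and ρ* := max_{1≤l≤k} max_{τ ∈ [a+1,...,b]} (1/C_l(τ)). Then ( Σ_{j=a+m_k}^{b} |f(j)|^r )^{1/r} ≤ sqrt(δ* · ρ*) · ( (Σ_{l=1}^{k} B_l) / k )^{1/2}. -/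

import Mathlib

/-!
Write `K_α n = Γ(n + α) / (n! Γ(α))`, which is `Ring.multichoose α n`. The fractional sum
`∇_a^{-α}` is causal convolution with `K_α`, and the Chu–Vandermonde identity for `multichoose`
says `K_α ⋆ K_β = K_{α+β}`. Iterating the telescoping identity under the vanishing initial data
gives the discrete Taylor formula `f = ∇_{a+1}^{-m} ∇^m f`; as `∇_{(a+1)*}^μ f` is
`∇_{a+1}^{-(m-μ)} ∇^m f`, the semigroup law yields `f = ∇_{a+1}^{-μ} ∇_{(a+1)*}^μ f`.
Cauchy–Schwarz on this representation bounds `f(j)²` by the `ℓ²` mass of the kernel times the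
`ℓ²` norm of the Caputo difference; summing `r/2`-th powers gives the inequality for each single
order `μ_l`, the weights enter through `1 / C_l ≤ ρ*`, and averaging over `l` concludes.
-/

open Finset

/-- Backward (nabla) difference: `∇f(t) = f(t) - f(t-1)`. -/
def nabla (f : ℤ → ℝ) : ℤ → ℝ := fun t => f t - f (t - 1)

/-- Rising factorial `t^{↑α} = Γ(t+α)/Γ(t)`. -/
noncomputable def risingFac (t α : ℝ) : ℝ := Real.Gamma (t + α) / Real.Gamma t

/-- The `ν`-th order nabla fractional sum `∇_a^{-ν} f (t) = Σ_{s=a}^{t} (t-s+1)^{↑(ν-1)}/Γ(ν) · f(s)`. -/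
noncomputable def fracSum (ν : ℝ) (a : ℤ) (f : ℤ → ℝ) : ℤ → ℝ := fun t =>
  ∑ s ∈ Finset.Icc a t, risingFac ((t - s + 1 : ℤ) : ℝ) (ν - 1) / Real.Gamma ν * f s

/-- Caputo-like nabla fractional difference `∇_{a*}^{μ} f = ∇_a^{-(m-μ)} (∇^m f)`, `m = ⌈μ⌉`. -/
noncomputable def caputoNabla (μ : ℝ) (a : ℤ) (f : ℤ → ℝ) : ℤ → ℝ :=
  fracSum ((⌈μ⌉₊ : ℝ) - μ) a (nabla^[⌈μ⌉₊] f)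

theorem Ring.multichoose_add {R : Type*} [CommRing R] [BinomialRing R] (r s : R) (n : ℕ) :
    Ring.multichoose (r + s) n =
      ∑ p ∈ antidiagonal n, Ring.multichoose r p.1 * Ring.multichoose s p.2 := by
  have h := Ring.add_choose_eq (r := -r) (s := -s) n (Commute.all _ _)
  rw [← neg_add, Ring.choose_neg'] at h
  simp only [Ring.choose_neg', smul_mul_smul_comm, ← Int.negOnePow_add, ← Nat.cast_add] at h
  rw [sum_congr rfl fun p hp => by rw [mem_antidiagonal.mp hp], ← smul_sum] at h
  exact MulAction.injective _ h

theorem Real.Gamma_natCast_add {α : ℝ} (hα : 0 < α) (n : ℕ) :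
    Real.Gamma (n + α) = (ascPochhammer ℝ n).eval α * Real.Gamma α := by
  induction n with
  | zero => simp
  | succ n ih =>
    rw [Nat.cast_succ, add_right_comm, Real.Gamma_add_one (by positivity), ih,
      ascPochhammer_succ_eval]
    ring

theorem risingFac_natCast_add_one_div_Gamma {α : ℝ} (hα : 0 < α) (n : ℕ) :
    risingFac (n + 1) (α - 1) / Real.Gamma α = Ring.multichoose α n := by
  have hfac : (n.factorial : ℝ) * Ring.multichoose α n = (ascPochhammer ℝ n).eval α := by
    rw [← nsmul_eq_mul, Ring.factorial_nsmul_multichoose_eq_ascPochhammer,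
      Polynomial.ascPochhammer_smeval_eq_eval]
  have hΓ : Real.Gamma α ≠ 0 := (Real.Gamma_pos_of_pos hα).ne'
  rw [risingFac, Real.Gamma_nat_eq_factorial, show (n : ℝ) + 1 + (α - 1) = n + α by ring,
    Real.Gamma_natCast_add hα, ← hfac]
  field_simp

theorem sum_Icc_nabla (f : ℤ → ℝ) {a j : ℤ} (hj : a ≤ j) :
    ∑ s ∈ Icc (a + 1) j, nabla f s = f j - f a := by
  induction j, hj using Int.leInduction with
  | base => simp
  | succ j hj ih =>
    rw [← insert_Icc_right_eq_Icc_add_one (by omega), sum_insert (by simp), ih, nabla,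
      add_sub_cancel_right]
    ring

theorem sum_Icc_eq_sum_antidiagonal (F : ℕ → ℕ → ℝ) {s t : ℤ} (hst : s ≤ t) :
    ∑ τ ∈ Icc s t, F (t - τ).toNat (τ - s).toNat =
      ∑ p ∈ antidiagonal (t - s).toNat, F p.1 p.2 := by
  refine sum_nbij' (fun τ => ((t - τ).toNat, (τ - s).toNat)) (fun p => s + p.2) ?_ ?_ ?_ ?_
    fun _ _ => rfl <;>
  · intro x hx
    simp only [mem_Icc, HasAntidiagonal.mem_antidiagonal, Prod.ext_iff] at hx ⊢
    omega

noncomputable def causalConv (K : ℕ → ℝ) (a : ℤ) (g : ℤ → ℝ) (t : ℤ) : ℝ :=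
  ∑ s ∈ Icc a t, K (t - s).toNat * g s

theorem causalConv_congr (K : ℕ → ℝ) {a t : ℤ} {g g' : ℤ → ℝ}
    (h : ∀ s ∈ Icc a t, g s = g' s) : causalConv K a g t = causalConv K a g' t :=
  sum_congr rfl fun s hs => by rw [h s hs]

theorem causalConv_causalConv (K L : ℕ → ℝ) (a : ℤ) (g : ℤ → ℝ) :
    causalConv K a (causalConv L a g) =
      causalConv (fun n => ∑ p ∈ antidiagonal n, K p.1 * L p.2) a g := by
  ext t
  simp only [causalConv, mul_sum]
  rw [sum_comm' (t' := Icc a t) (s' := fun s => Icc s t)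
    (by intro τ s; simp only [mem_Icc]; omega)]
  refine sum_congr rfl fun s hs => ?_
  rw [sum_mul, ← sum_Icc_eq_sum_antidiagonal (fun i j => K i * L j * g s) (mem_Icc.mp hs).2]
  exact sum_congr rfl fun τ _ => by ring

theorem fracSum_eq_causalConv {ν : ℝ} (hν : 0 < ν) (a : ℤ) (g : ℤ → ℝ) :
    fracSum ν a g = causalConv (Ring.multichoose ν) a g := by
  ext t
  refine sum_congr rfl fun s hs => ?_
  have hst : ((t - s + 1 : ℤ) : ℝ) = ((t - s).toNat : ℕ) + 1 := by
    rw [Int.cast_add, Int.cast_one, ← Int.cast_natCast,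
      Int.toNat_of_nonneg (by linarith [(mem_Icc.mp hs).2])]
  rw [hst, risingFac_natCast_add_one_div_Gamma hν]

theorem eq_causalConv_one_nabla {f : ℤ → ℝ} {a j : ℤ} (hfa : f a = 0) (hj : a ≤ j) :
    f j = causalConv (Ring.multichoose 1) (a + 1) (nabla f) j := by
  simp [causalConv, sum_Icc_nabla f hj, hfa]

theorem eq_causalConv_nabla_iterate {f : ℤ → ℝ} {a j : ℤ} {m : ℕ} (hm : 0 < m)
    (hf : ∀ i < m, nabla^[i] f a = 0) (hj : a ≤ j) :
    f j = causalConv (Ring.multichoose (m : ℝ)) (a + 1) (nabla^[m] f) j := by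
  induction m, hm using Nat.le_induction generalizing f j with
  | base => simpa using eq_causalConv_one_nabla (hf 0 one_pos) hj
  | succ m hm ih =>
    have hnabla : ∀ s ∈ Icc (a + 1) j,
        nabla f s = causalConv (Ring.multichoose (m : ℝ)) (a + 1) (nabla^[m + 1] f) s :=
      fun s hs => ih (fun i hi => hf (i + 1) (by omega)) (by linarith [(mem_Icc.mp hs).1])
    rw [eq_causalConv_one_nabla (f := f) (hf 0 (by omega)) hj, causalConv_congr _ hnabla,
      causalConv_causalConv, ← funext (Ring.multichoose_add (1 : ℝ) (m : ℝ)), add_comm (1 : ℝ),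
      Nat.cast_succ]

theorem fracSum_caputoNabla {μ : ℝ} (hμ : 0 < μ) (hμ' : ∀ n : ℤ, μ ≠ n) {f : ℤ → ℝ} {a j : ℤ}
    (hf : ∀ i < ⌈μ⌉₊, nabla^[i] f a = 0) (hj : a ≤ j) :
    fracSum μ (a + 1) (caputoNabla μ (a + 1) f) j = f j := by
  have hν : 0 < (⌈μ⌉₊ : ℝ) - μ :=
    sub_pos.mpr ((Nat.le_ceil μ).lt_of_ne fun h => hμ' ⌈μ⌉₊ (by exact_mod_cast h))
  rw [caputoNabla, fracSum_eq_causalConv hμ, fracSum_eq_causalConv hν, causalConv_causalConv,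
    ← funext (Ring.multichoose_add μ _), add_sub_cancel,
    ← eq_causalConv_nabla_iterate (Nat.ceil_pos.mpr hμ) hf hj]

theorem fracSum_sq_le (ν : ℝ) (a : ℤ) (g : ℤ → ℝ) (t : ℤ) :
    fracSum ν a g t ^ 2 ≤ 1 / Real.Gamma ν ^ 2 *
      (∑ s ∈ Icc a t, risingFac ((t - s + 1 : ℤ) : ℝ) (ν - 1) ^ 2) * ∑ s ∈ Icc a t, g s ^ 2 := by
  calc fracSum ν a g t ^ 2
      ≤ (∑ s ∈ Icc a t, (risingFac ((t - s + 1 : ℤ) : ℝ) (ν - 1) / Real.Gamma ν) ^ 2) *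
          ∑ s ∈ Icc a t, g s ^ 2 := sum_mul_sq_le_sq_mul_sq _ _ _
    _ = _ := by simp only [div_pow, ← sum_div]; ring

theorem sum_le_mul_sum_mul {ι : Type*} (s : Finset ι) {C x : ι → ℝ} {ρ : ℝ}
    (hC : ∀ i ∈ s, 0 < C i) (hρ : ∀ i ∈ s, (C i)⁻¹ ≤ ρ) (hx : ∀ i ∈ s, 0 ≤ x i) :
    ∑ i ∈ s, x i ≤ ρ * ∑ i ∈ s, C i * x i := by
  rw [mul_sum]
  refine sum_le_sum fun i hi => ?_
  calc x i = (C i)⁻¹ * (C i * x i) := by field_simp [(hC i hi).ne']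
    _ ≤ ρ * (C i * x i) := by gcongr; exacts [mul_nonneg (hC i hi).le (hx i hi), hρ i hi]

theorem sum_abs_rpow_rpow_le {ι : Type*} (s : Finset ι) {x S : ι → ℝ} {c r : ℝ}
    (hc : 0 ≤ c) (hr : 0 < r) (hS : ∀ i ∈ s, 0 ≤ S i) (h : ∀ i ∈ s, x i ^ 2 ≤ c * S i) :
    (∑ i ∈ s, |x i| ^ r) ^ (2 / r) ≤ c * (∑ i ∈ s, S i ^ (r / 2)) ^ (2 / r) := by
  have hpow : ∀ i ∈ s, |x i| ^ r ≤ c ^ (r / 2) * S i ^ (r / 2) := fun i hi => by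
    calc |x i| ^ r = (x i ^ 2) ^ (r / 2) := by
          rw [← sq_abs, ← Real.rpow_two, ← Real.rpow_mul (abs_nonneg _)]; ring_nf
      _ ≤ (c * S i) ^ (r / 2) := by gcongr; exact h i hi
      _ = c ^ (r / 2) * S i ^ (r / 2) := Real.mul_rpow hc (hS i hi)
  calc (∑ i ∈ s, |x i| ^ r) ^ (2 / r)
      ≤ (c ^ (r / 2) * ∑ i ∈ s, S i ^ (r / 2)) ^ (2 / r) := by
        rw [mul_sum]; gcongr with i hi; exact hpow i hi
    _ = c * (∑ i ∈ s, S i ^ (r / 2)) ^ (2 / r) := by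
        rw [Real.mul_rpow (by positivity) (sum_nonneg fun i hi => Real.rpow_nonneg (hS i hi) _),
          ← Real.rpow_mul hc, div_mul_div_cancel₀ two_ne_zero, div_self hr.ne', Real.rpow_one]

theorem caputoNabla_sobolev {μ r : ℝ} (hμ : 0 < μ) (hμ' : ∀ n : ℤ, μ ≠ n) (hr : 0 < r)
    {f : ℤ → ℝ} {a : ℤ} (b : ℤ) (hf : ∀ i < ⌈μ⌉₊, nabla^[i] f a = 0) :
    (∑ j ∈ Icc (a + ⌈μ⌉₊) b, |f j| ^ r) ^ (2 / r) ≤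
      1 / Real.Gamma μ ^ 2 *
        (∑ j ∈ Icc (a + ⌈μ⌉₊) b,
          (∑ τ ∈ Icc (a + 1) j, risingFac ((j - τ + 1 : ℤ) : ℝ) (μ - 1) ^ 2) ^ (r / 2)) ^ (2 / r) *
        ∑ τ ∈ Icc (a + 1) b, caputoNabla μ (a + 1) f τ ^ 2 := by
  set G := ∑ τ ∈ Icc (a + 1) b, caputoNabla μ (a + 1) f τ ^ 2
  have hG : 0 ≤ G := sum_nonneg fun _ _ => sq_nonneg _
  have hpointwise : ∀ j ∈ Icc (a + ⌈μ⌉₊) b, f j ^ 2 ≤ G / Real.Gamma μ ^ 2 *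
      ∑ τ ∈ Icc (a + 1) j, risingFac ((j - τ + 1 : ℤ) : ℝ) (μ - 1) ^ 2 := by
    intro j hj
    obtain ⟨hj₁, hj₂⟩ := mem_Icc.mp hj
    calc f j ^ 2 = fracSum μ (a + 1) (caputoNabla μ (a + 1) f) j ^ 2 := by
          rw [fracSum_caputoNabla hμ hμ' hf (by omega)]
      _ ≤ 1 / Real.Gamma μ ^ 2 *
            (∑ τ ∈ Icc (a + 1) j, risingFac ((j - τ + 1 : ℤ) : ℝ) (μ - 1) ^ 2) *
            ∑ τ ∈ Icc (a + 1) j, caputoNabla μ (a + 1) f τ ^ 2 := fracSum_sq_le _ _ _ _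
      _ ≤ 1 / Real.Gamma μ ^ 2 *
            (∑ τ ∈ Icc (a + 1) j, risingFac ((j - τ + 1 : ℤ) : ℝ) (μ - 1) ^ 2) * G := by
          gcongr
          exact sum_le_sum_of_subset_of_nonneg (Icc_subset_Icc_right hj₂) fun _ _ _ => sq_nonneg _
      _ = _ := by ring
  refine (sum_abs_rpow_rpow_le _ (by positivity) hr (fun j _ => sum_nonneg fun _ _ => sq_nonneg _)
    hpointwise).trans_eq ?_
  ring

theorem rpow_one_div_le_sqrt_mul_average {ι : Type*} {s : Finset ι} (hs : s.Nonempty)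
    {B : ι → ℝ} {P D r : ℝ} (hP : 0 ≤ P) (hD : 0 ≤ D) (hr : 0 < r) (hB : ∀ i ∈ s, 0 ≤ B i)
    (h : ∀ i ∈ s, P ^ (2 / r) ≤ D * B i) :
    P ^ (1 / r) ≤ √D * ((∑ i ∈ s, B i) / #s) ^ (1 / 2 : ℝ) := by
  have hcard : (0 : ℝ) < #s := by exact_mod_cast hs.card_pos
  have havg : P ^ (2 / r) ≤ D * ((∑ i ∈ s, B i) / #s) := by
    rw [← mul_div_assoc, le_div_iff₀ hcard, mul_sum]
    calc P ^ (2 / r) * #s = ∑ i ∈ s, P ^ (2 / r) := by rw [sum_const, nsmul_eq_mul, mul_comm]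
      _ ≤ ∑ i ∈ s, D * B i := sum_le_sum h
  calc P ^ (1 / r) = (P ^ (2 / r)) ^ (1 / 2 : ℝ) := by
        rw [← Real.rpow_mul hP]; congr 1; field_simp
    _ ≤ (D * ((∑ i ∈ s, B i) / #s)) ^ (1 / 2 : ℝ) := by gcongr
    _ = √D * ((∑ i ∈ s, B i) / #s) ^ (1 / 2 : ℝ) := by
        rw [Real.mul_rpow hD (div_nonneg (sum_nonneg hB) hcard.le), Real.sqrt_eq_rpow]

theorem discrete_nabla_fractional_average_sobolev_general
    (k : ℕ) (hk : 1 ≤ k) (μ : ℕ → ℝ) (m : ℕ → ℕ)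
    (hμpos : ∀ l ∈ Finset.Icc 1 k, 0 < μ l)
    (hμint : ∀ l ∈ Finset.Icc 1 k, ∀ n : ℤ, μ l ≠ n)
    (hμmono : ∀ l l', 1 ≤ l → l < l' → l' ≤ k → μ l < μ l')
    (hm : ∀ l ∈ Finset.Icc 1 k, m l = ⌈μ l⌉₊)
    (a : ℕ) (b : ℤ)
    (f : ℤ → ℝ) (hf0 : ∀ τ < m k, nabla^[τ] f a = 0)
    (r : ℝ) (hr : 1 ≤ r)
    (C : ℕ → ℤ → ℝ)
    (hC : ∀ l ∈ Finset.Icc 1 k, ∀ s ∈ Finset.Icc ((a : ℤ) + 1) b, 0 < C l s) :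
    let B : ℕ → ℝ := fun l =>
      ∑ τ ∈ Finset.Icc ((a : ℤ) + 1) b, C l τ * caputoNabla (μ l) ((a : ℤ) + 1) f τ ^ 2
    let δs : ℝ := (Finset.Icc 1 k).sup' (Finset.nonempty_Icc.mpr hk) fun l =>
      (1 / Real.Gamma (μ l) ^ 2) *
        (∑ j ∈ Finset.Icc ((a : ℤ) + m l) b,
          (∑ τ ∈ Finset.Icc ((a : ℤ) + 1) j,
            risingFac ((j - τ + 1 : ℤ) : ℝ) (μ l - 1) ^ 2) ^ (r / 2)) ^ (2 / r)
    let ρs : ℝ := (Finset.Icc 1 k).sup' (Finset.nonempty_Icc.mpr hk) fun l =>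
      sSup ((fun τ : ℤ => (C l τ)⁻¹) '' Set.Icc ((a : ℤ) + 1) b)
    (∑ j ∈ Finset.Icc ((a : ℤ) + m k) b, |f j| ^ r) ^ (1 / r) ≤
      Real.sqrt (δs * ρs) * ((∑ l ∈ Finset.Icc 1 k, B l) / k) ^ ((1 : ℝ) / 2) := by
  intro B δs ρs
  have hr₀ : 0 < r := by linarith
  have hk_mem : k ∈ Icc 1 k := mem_Icc.mpr ⟨hk, le_rfl⟩
  have hm_le : ∀ l ∈ Icc 1 k, m l ≤ m k := fun l hl => by
    rcases (mem_Icc.mp hl).2.lt_or_eq with hlk | rfl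
    · rw [hm l hl, hm k hk_mem]
      exact Nat.ceil_mono (hμmono l k (mem_Icc.mp hl).1 hlk le_rfl).le
    · rfl
  have hρ : ∀ l ∈ Icc 1 k, ∀ τ ∈ Icc ((a : ℤ) + 1) b, (C l τ)⁻¹ ≤ ρs := fun l hl τ hτ =>
    (le_csSup ((Set.finite_Icc _ _).image _).bddAbove ⟨τ, by simpa using hτ, rfl⟩).trans
      (le_sup' (fun l => _) hl : _ ≤ ρs)
  have hρs : 0 ≤ ρs := by
    refine (Real.sSup_nonneg ?_).trans (le_sup' (fun l => _) hk_mem : _ ≤ ρs)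
    rintro _ ⟨τ, hτ, rfl⟩
    exact (inv_pos.mpr (hC k hk_mem τ (by simpa using hτ))).le
  have hδs : 0 ≤ δs := by
    refine le_trans ?_ (le_sup' (fun l => _) hk_mem : _ ≤ δs)
    positivity
  have hB : ∀ l ∈ Icc 1 k, 0 ≤ B l := fun l hl =>
    sum_nonneg fun τ hτ => mul_nonneg (hC l hl τ hτ).le (sq_nonneg _)
  have hsobolev : ∀ l ∈ Icc 1 k,
      (∑ j ∈ Icc ((a : ℤ) + m k) b, |f j| ^ r) ^ (2 / r) ≤ δs * ρs * B l := by
    intro l hl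
    have hfl : ∀ i < ⌈μ l⌉₊, nabla^[i] f a = 0 := fun i hi =>
      hf0 i (hi.trans_le (hm l hl ▸ hm_le l hl))
    have h := caputoNabla_sobolev (hμpos l hl) (hμint l hl) hr₀ b hfl
    rw [← hm l hl] at h
    calc _ ≤ (∑ j ∈ Icc ((a : ℤ) + m l) b, |f j| ^ r) ^ (2 / r) := by
          gcongr
          exact hm_le l hl
      _ ≤ _ := h
      _ ≤ δs * (ρs * B l) := by
          gcongr
          · exact (le_sup' (fun l => _) hl : _ ≤ δs)
          · exact sum_le_mul_sum_mul _ (hC l hl) (hρ l hl) fun _ _ => sq_nonneg _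
      _ = δs * ρs * B l := (mul_assoc _ _ _).symm
  simpa using rpow_one_div_le_sqrt_mul_average (nonempty_Icc.mpr hk)
    (sum_nonneg fun _ _ => by positivity) (mul_nonneg hδs hρs) hr₀ hB hsobolev

/-- Discrete nabla fractional average Sobolev inequality. -/
theorem discrete_nabla_fractional_average_sobolev
    (k : ℕ) (hk : 1 ≤ k) (μ : ℕ → ℝ) (m : ℕ → ℕ)
    (hμpos : ∀ l ∈ Finset.Icc 1 k, 0 < μ l)
    (hμint : ∀ l ∈ Finset.Icc 1 k, ∀ n : ℤ, μ l ≠ n)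
    (hμmono : ∀ l l', 1 ≤ l → l < l' → l' ≤ k → μ l < μ l')
    (hm : ∀ l ∈ Finset.Icc 1 k, m l = ⌈μ l⌉₊)
    (a : ℕ) (b : ℤ) (hb : (a : ℤ) + m k < b)
    (f : ℤ → ℝ) (hf0 : ∀ τ < m k, nabla^[τ] f a = 0)
    (r : ℝ) (hr : 1 ≤ r)
    (C : ℕ → ℤ → ℝ)
    (hC : ∀ l ∈ Finset.Icc 1 k, ∀ s ∈ Finset.Icc ((a : ℤ) + 1) b, 0 < C l s) :
    let B : ℕ → ℝ := fun l =>
      ∑ τ ∈ Finset.Icc ((a : ℤ) + 1) b, C l τ * caputoNabla (μ l) ((a : ℤ) + 1) f τ ^ 2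
    let δs : ℝ := (Finset.Icc 1 k).sup' (Finset.nonempty_Icc.mpr hk) fun l =>
      (1 / Real.Gamma (μ l) ^ 2) *
        (∑ j ∈ Finset.Icc ((a : ℤ) + m l) b,
          (∑ τ ∈ Finset.Icc ((a : ℤ) + 1) j,
            risingFac ((j - τ + 1 : ℤ) : ℝ) (μ l - 1) ^ 2) ^ (r / 2)) ^ (2 / r)
    let ρs : ℝ := (Finset.Icc 1 k).sup' (Finset.nonempty_Icc.mpr hk) fun l =>
      sSup ((fun τ : ℤ => (C l τ)⁻¹) '' Set.Icc ((a : ℤ) + 1) b)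
    (∑ j ∈ Finset.Icc ((a : ℤ) + m k) b, |f j| ^ r) ^ (1 / r) ≤
      Real.sqrt (δs * ρs) * ((∑ l ∈ Finset.Icc 1 k, B l) / k) ^ ((1 : ℝ) / 2) :=
  discrete_nabla_fractional_average_sobolev_general k hk μ m hμpos hμint hμmono hm a b f hf0 r hr C
    hC
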